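/- arXiv:2012.14529 — 3 statements merged into one kernel-verified Lean document; each statement's English description precedes it below -/
import Mathlib

section
/- Let V be a real vector space and let F : V × V → ℝ be a function satisfying: (i) F(X,Y) = F(Y,X) for all X,Y; (ii) F(X,Y) ≥ 0 for all X,Y; (iii) F(X, a·Y) = a²·F(X,Y) for all a ∈ ℝ and all X,Y; (iv) F(X, Y+Z) + F(X, Y−Z) = 2·F(X,Y) + 2·F(X,Z) for all X,Y,Z; and (v) F(X,X) = 0 for all X. If X₀, Y₀ ∈ V satisfy F(X₀,Y₀) = 0, then F(a·X₀ + b·Y₀, c·X₀ + d·Y₀) = 0 for all real numbers a, b, c, d. -/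
/-!
Dropping the nonnegative term `F X (Y - Z)` from the parallelogram law gives
`F X (Y + Z) ≤ 2 F X Y + 2 F X Z`, so together with homogeneity the zero set of each `F X ·`
is closed under linear combinations. Since `F X₀ X₀ = F X₀ Y₀ = F Y₀ Y₀ = 0`, any `W` in the span
of `X₀, Y₀` satisfies `F X₀ W = F Y₀ W = 0`; by symmetry `F W` vanishes at `X₀` and `Y₀`, hence on
the whole span.
-/

theorem map_add_le_of_parallelogram {V : Type*} [AddCommGroup V] {F : V → V → ℝ}
    (hpos : ∀ X Y : V, 0 ≤ F X Y)
    (hpar : ∀ X Y Z : V, F X (Y + Z) + F X (Y - Z) = 2 * F X Y + 2 * F X Z) (X Y Z : V) :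
    F X (Y + Z) ≤ 2 * F X Y + 2 * F X Z := by
  linarith [hpar X Y Z, hpos X (Y - Z)]

theorem map_smul_add_smul_eq_zero {V : Type*} [AddCommGroup V] [Module ℝ V] {F : V → V → ℝ}
    (hpos : ∀ X Y : V, 0 ≤ F X Y)
    (hhom : ∀ (a : ℝ) (X Y : V), F X (a • Y) = a ^ 2 * F X Y)
    (hpar : ∀ X Y Z : V, F X (Y + Z) + F X (Y - Z) = 2 * F X Y + 2 * F X Z)
    {X Y Z : V} (hY : F X Y = 0) (hZ : F X Z = 0) (a b : ℝ) :
    F X (a • Y + b • Z) = 0 := by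
  have hle := map_add_le_of_parallelogram hpos hpar X (a • Y) (b • Z)
  rw [hhom, hhom, hY, hZ] at hle
  linarith [hpos X (a • Y + b • Z)]

/-- If `F : V × V → ℝ` is symmetric, nonnegative, quadratic in each variable
(`F X (a • Y) = a ^ 2 * F X Y` and the parallelogram law), `F X X = 0` for all `X`, and
`F X₀ Y₀ = 0`, then `F` vanishes on the real span of `{X₀, Y₀}`:
`F (a • X₀ + b • Y₀) (c • X₀ + d • Y₀) = 0` for all reals `a b c d`. -/
theorem stmt8 {V : Type*} [AddCommGroup V] [Module ℝ V] (F : V → V → ℝ)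
    (hsymm : ∀ X Y : V, F X Y = F Y X)
    (hpos : ∀ X Y : V, 0 ≤ F X Y)
    (hhom : ∀ (a : ℝ) (X Y : V), F X (a • Y) = a ^ 2 * F X Y)
    (hpar : ∀ X Y Z : V, F X (Y + Z) + F X (Y - Z) = 2 * F X Y + 2 * F X Z)
    (hnorm : ∀ X : V, F X X = 0)
    (X₀ Y₀ : V) (hXY : F X₀ Y₀ = 0) :
    ∀ a b c d : ℝ, F (a • X₀ + b • Y₀) (c • X₀ + d • Y₀) = 0 := by
  intro a b c d
  have hX₀ : F (a • X₀ + b • Y₀) X₀ = 0 := by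
    rw [hsymm]
    exact map_smul_add_smul_eq_zero hpos hhom hpar (hnorm X₀) hXY a b
  have hY₀ : F (a • X₀ + b • Y₀) Y₀ = 0 := by
    rw [hsymm]
    exact map_smul_add_smul_eq_zero hpos hhom hpar ((hsymm Y₀ X₀).trans hXY) (hnorm Y₀) a b
  exact map_smul_add_smul_eq_zero hpos hhom hpar hX₀ hY₀ c d
end

section
/- Let U ⊆ ℂ be a nonempty open connected set and let U* := { conj z : z ∈ U } be its image under complex conjugation. Let F : ℂ × ℂ → ℂ be analytic (holomorphic as a function of two complex variables) on U × U*. If F(z, conj z) = 0 for every z ∈ U, then F(z, w) = 0 for every z ∈ U and every w ∈ U*. -/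
/-!
In the coordinates `(x, y) ↦ (x + i y, x - i y)` the antidiagonal `{(z, conj z)}` becomes the
set of real points, and a function analytic on a product of two discs that vanishes at the real
points vanishes identically: apply the one-variable identity principle first in `y` for real `x`,
then in `x`. So `F` vanishes near a point `(z₀, conj z₀)`, and the identity principle on the
connected set `U × U*` finishes the proof.
-/

open ComplexConjugate

open Complex Filter Metric Set Topology

def conjCoords (p : ℂ × ℂ) : ℂ × ℂ := (p.1 + I * p.2, p.1 - I * p.2)

noncomputable def conjCoordsInv (q : ℂ × ℂ) : ℂ × ℂ := ((q.1 + q.2) / 2, (q.1 - q.2) / (2 * I))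

theorem continuous_conjCoords : Continuous conjCoords := by
  unfold conjCoords; fun_prop

theorem continuous_conjCoordsInv : Continuous conjCoordsInv := by
  unfold conjCoordsInv; fun_prop

theorem analyticOnNhd_conjCoords (s : Set (ℂ × ℂ)) : AnalyticOnNhd ℂ conjCoords s := fun _ _ =>
  (analyticAt_fst.add (analyticAt_const.mul analyticAt_snd)).prod
    (analyticAt_fst.sub (analyticAt_const.mul analyticAt_snd))

theorem conjCoords_conjCoordsInv (q : ℂ × ℂ) : conjCoords (conjCoordsInv q) = q := by
  simp only [conjCoords, conjCoordsInv]
  ext <;> field_simp <;> ring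

theorem conjCoordsInv_conjCoords (p : ℂ × ℂ) : conjCoordsInv (conjCoords p) = p := by
  simp only [conjCoords, conjCoordsInv]
  ext <;> field_simp <;> ring_nf

theorem conjCoords_ofReal (x y : ℝ) : conjCoords (x, y) = (⟨x, y⟩, conj ⟨x, y⟩) := by
  simp only [conjCoords, Prod.mk.injEq]
  constructor <;> apply Complex.ext <;> simp

section

variable {E : Type*} [NormedAddCommGroup E] [NormedSpace ℂ E]

theorem AnalyticOnNhd.eqOn_zero_of_preconnected_of_ofReal_eq_zero {f : ℂ → E} {U : Set ℂ}
    (hf : AnalyticOnNhd ℂ f U) (hU : IsPreconnected U) (hUo : IsOpen U) {c : ℝ}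
    (hc : (c : ℂ) ∈ U) (h0 : ∀ x : ℝ, (x : ℂ) ∈ U → f x = 0) : EqOn f 0 U := by
  refine hf.eqOn_zero_of_preconnected_of_frequently_eq_zero hU hc ?_
  have hreal : Tendsto ((↑) : ℝ → ℂ) (𝓝[≠] c) (𝓝[≠] (c : ℂ)) :=
    tendsto_nhdsWithin_of_tendsto_nhds_of_eventually_within _
      (continuous_ofReal.tendsto c |>.mono_left nhdsWithin_le_nhds)
      (eventually_nhdsWithin_of_forall fun x hx => ofReal_injective.ne hx)
  have hzero : ∀ᶠ x : ℝ in 𝓝 c, f x = 0 :=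
    (continuous_ofReal.continuousAt.eventually_mem (hUo.mem_nhds hc)).mono h0
  exact hreal.frequently (eventually_nhdsWithin_of_eventually_nhds hzero).frequently

theorem AnalyticOnNhd.eqOn_zero_of_preconnected_prod_of_ofReal_eq_zero {G : ℂ × ℂ → E}
    {U V : Set ℂ} (hG : AnalyticOnNhd ℂ G (U ×ˢ V)) (hU : IsPreconnected U) (hUo : IsOpen U)
    (hV : IsPreconnected V) (hVo : IsOpen V) {a b : ℝ} (ha : (a : ℂ) ∈ U) (hb : (b : ℂ) ∈ V)
    (h0 : ∀ x y : ℝ, (x : ℂ) ∈ U → (y : ℂ) ∈ V → G (x, y) = 0) : EqOn G 0 (U ×ˢ V) := by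
  have hslice_fst : ∀ v ∈ V, AnalyticOnNhd ℂ (fun u => G (u, v)) U := fun v hv u hu =>
    (hG (u, v) ⟨hu, hv⟩).comp₂ analyticAt_id analyticAt_const
  have hslice_snd : ∀ u ∈ U, AnalyticOnNhd ℂ (fun v => G (u, v)) V := fun u hu v hv =>
    (hG (u, v) ⟨hu, hv⟩).comp₂ analyticAt_const analyticAt_id
  have hreal_fst : ∀ x : ℝ, (x : ℂ) ∈ U → ∀ v ∈ V, G (x, v) = 0 := fun x hx =>
    (hslice_snd x hx).eqOn_zero_of_preconnected_of_ofReal_eq_zero hV hVo hb (h0 x · hx)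
  rintro ⟨u, v⟩ ⟨hu, hv⟩
  exact (hslice_fst v hv).eqOn_zero_of_preconnected_of_ofReal_eq_zero hU hUo ha
    (fun x hx => hreal_fst x hx v hv) hu

theorem AnalyticOnNhd.eventuallyEq_zero_of_conj_eq_zero {U : Set ℂ} (hUo : IsOpen U) {F : ℂ × ℂ → E}
    (hF : AnalyticOnNhd ℂ F (U ×ˢ ((fun z => conj z) '' U)))
    (hvanish : ∀ z ∈ U, F (z, conj z) = 0) {z₀ : ℂ} (hz₀ : z₀ ∈ U) :
    F =ᶠ[𝓝 (z₀, conj z₀)] 0 := by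
  set W := conjCoords ⁻¹' (U ×ˢ ((fun z => conj z) '' U))
  have hW : IsOpen W :=
    (hUo.prod (conjCLE.toHomeomorph.isOpenMap U hUo)).preimage continuous_conjCoords
  have hz₀coords : conjCoords (z₀.re, z₀.im) = (z₀, conj z₀) := conjCoords_ofReal _ _
  have hp₀ : ((z₀.re : ℂ), (z₀.im : ℂ)) ∈ W := by
    simp only [W, mem_preimage, hz₀coords]
    exact ⟨hz₀, z₀, hz₀, rfl⟩
  obtain ⟨ε, hε, hball⟩ := Metric.isOpen_iff.1 hW _ hp₀
  rw [← ball_prod_same] at hball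
  have hGan : AnalyticOnNhd ℂ (F ∘ conjCoords) (ball (z₀.re : ℂ) ε ×ˢ ball (z₀.im : ℂ) ε) :=
    (hF.comp (analyticOnNhd_conjCoords W) (mapsTo_preimage _ _)).mono hball
  have hGreal : ∀ x y : ℝ, (x : ℂ) ∈ ball (z₀.re : ℂ) ε → (y : ℂ) ∈ ball (z₀.im : ℂ) ε →
      (F ∘ conjCoords) (x, y) = 0 := by
    intro x y hx hy
    have hxy : ((x : ℂ), (y : ℂ)) ∈ W := hball (mk_mem_prod hx hy)
    simp only [W, mem_preimage, conjCoords_ofReal] at hxy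
    simpa [conjCoords_ofReal] using hvanish _ hxy.1
  have hG := hGan.eqOn_zero_of_preconnected_prod_of_ofReal_eq_zero
    (convex_ball _ _).isPreconnected isOpen_ball (convex_ball _ _).isPreconnected isOpen_ball
    (mem_ball_self hε) (mem_ball_self hε) hGreal
  have hnhds : conjCoordsInv ⁻¹' (ball (z₀.re : ℂ) ε ×ˢ ball (z₀.im : ℂ) ε) ∈ 𝓝 (z₀, conj z₀) := by
    refine continuous_conjCoordsInv.continuousAt.preimage_mem_nhds ?_
    rw [← hz₀coords, conjCoordsInv_conjCoords]
    exact (isOpen_ball.prod isOpen_ball).mem_nhds ⟨mem_ball_self hε, mem_ball_self hε⟩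
  filter_upwards [hnhds] with q hq
  simpa [conjCoords_conjCoordsInv] using hG hq

end

theorem stmt11_general (U : Set ℂ) (hUopen : IsOpen U)
    (hUconn : IsConnected U)
    (F : ℂ × ℂ → ℂ)
    (hF : AnalyticOnNhd ℂ F (U ×ˢ ((fun z => conj z) '' U)))
    (hvanish : ∀ z ∈ U, F (z, conj z) = 0) :
    ∀ z ∈ U, ∀ w ∈ (fun z => conj z) '' U, F (z, w) = 0 := by
  obtain ⟨z₀, hz₀⟩ := hUconn.nonempty
  have hprod : IsPreconnected (U ×ˢ ((fun z => conj z) '' U)) :=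
    (hUconn.prod (hUconn.image _ continuous_conj.continuousOn)).isPreconnected
  intro z hz w hw
  exact hF.eqOn_zero_of_preconnected_of_eventuallyEq_zero hprod ⟨hz₀, z₀, hz₀, rfl⟩
    (hF.eventuallyEq_zero_of_conj_eq_zero hUopen hvanish hz₀) ⟨hz, hw⟩

/-- Holomorphic–antiholomorphic vanishing principle: let `U ⊆ ℂ` be a nonempty open
connected set, `U* = conj '' U`, and `F : ℂ × ℂ → ℂ` analytic on `U ×ˢ U*`. If
`F (z, conj z) = 0` for all `z ∈ U`, then `F (z, w) = 0` for all `z ∈ U`, `w ∈ U*`. -/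
theorem stmt11 (U : Set ℂ) (hU : U.Nonempty) (hUopen : IsOpen U)
    (hUconn : IsConnected U)
    (F : ℂ × ℂ → ℂ)
    (hF : AnalyticOnNhd ℂ F (U ×ˢ ((fun z => conj z) '' U)))
    (hvanish : ∀ z ∈ U, F (z, conj z) = 0) :
    ∀ z ∈ U, ∀ w ∈ (fun z => conj z) '' U, F (z, w) = 0 :=
  stmt11_general U hUopen hUconn F hF hvanish
end

section
/- Let U ⊆ ℂ be a nonempty open connected set, let N ≥ 1, and let f₁, …, f_N, g₁, …, g_N : ℂ → ℂ be functions such that each f_j is analytic on U and each g_j is antiholomorphic on U (i.e., the function z ↦ conj(g_j(z)) is analytic on U). If Σ_{j=1}^N f_j(z)·g_j(z) = 0 for every z ∈ U, then Σ_{j=1}^N f_j(z)·g_j(w) = 0 for every pair z, w ∈ U. -/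
/-!
Put `K (z, w) = ∑ j, f j z * g j (conj w)`, a holomorphic function of two variables on
`U × conj U` which vanishes on the totally real surface `{(z, conj z)}`. In the coordinates
`z = x + y i`, `w = x - y i` this surface becomes `ℝ²`, and a function holomorphic in `(x, y)`
vanishing on a piece of `ℝ²` vanishes identically: apply the one-variable identity theorem first
in `y` for real `x`, then in `x`. Hence `K` vanishes near `(p, conj p)`, and by the identity
theorem on the connected set `U × conj U` it vanishes everywhere.
-/

open ComplexConjugate Filter Metric Set Topology

theorem AnalyticAt.conj_conj {h : ℂ → ℂ} {z : ℂ} (hh : AnalyticAt ℂ h z) :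
    AnalyticAt ℂ (conj ∘ h ∘ conj) (conj z) := by
  rw [Complex.analyticAt_iff_eventually_differentiableAt] at hh ⊢
  have hconj : Tendsto conj (𝓝 (conj z)) (𝓝 z) := by
    simpa using Complex.continuous_conj.tendsto (conj z)
  filter_upwards [hconj.eventually hh] with w hw
  exact differentiableAt_conj_conj_iff.mpr hw

theorem frequently_ofReal_nhdsNE {P : ℂ → Prop} {a : ℝ} (h : ∀ᶠ s : ℝ in 𝓝 a, P s) :
    ∃ᶠ z in 𝓝[≠] (a : ℂ), P z := by
  have hofReal : Tendsto ((↑) : ℝ → ℂ) (𝓝[≠] a) (𝓝[≠] (a : ℂ)) :=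
    Complex.continuous_ofReal.continuousWithinAt.tendsto_nhdsWithin fun s hs => by simpa using hs
  exact hofReal.frequently (h.filter_mono nhdsWithin_le_nhds).frequently

section

variable {E : Type*} [NormedAddCommGroup E] [NormedSpace ℂ E]

theorem AnalyticOnNhd.eqOn_zero_of_eventually_ofReal_eq_zero {h : ℂ → E} {V : Set ℂ}
    (hh : AnalyticOnNhd ℂ h V) (hV : IsPreconnected V) {a : ℝ} (ha : (a : ℂ) ∈ V)
    (h0 : ∀ᶠ s : ℝ in 𝓝 a, h s = 0) : EqOn h 0 V :=
  hh.eqOn_zero_of_preconnected_of_frequently_eq_zero hV ha (frequently_ofReal_nhdsNE h0)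

theorem AnalyticOnNhd.eqOn_zero_of_eventually_ofReal_prod_eq_zero {Φ : ℂ × ℂ → E}
    {V W : Set ℂ} (hΦ : AnalyticOnNhd ℂ Φ (V ×ˢ W)) (hV : IsPreconnected V)
    (hW : IsPreconnected W) {a b : ℝ} (ha : V ∈ 𝓝 (a : ℂ)) (hb : (b : ℂ) ∈ W)
    (h0 : ∀ᶠ q : ℝ × ℝ in 𝓝 (a, b), Φ (q.1, q.2) = 0) : EqOn Φ 0 (V ×ˢ W) := by
  have hslice : ∀ᶠ s : ℝ in 𝓝 a, ∀ y ∈ W, Φ (s, y) = 0 := by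
    rw [nhds_prod_eq] at h0
    filter_upwards [h0.curry, Complex.continuous_ofReal.continuousAt.preimage_mem_nhds ha]
      with s hs hsV
    exact AnalyticOnNhd.eqOn_zero_of_eventually_ofReal_eq_zero
      (fun y hy => (hΦ (s, y) ⟨hsV, hy⟩).curry_right) hW hb hs
  rintro ⟨x, y⟩ ⟨hx, hy⟩
  exact AnalyticOnNhd.eqOn_zero_of_eventually_ofReal_eq_zero (h := fun x => Φ (x, y))
    (fun x hx => (hΦ (x, y) ⟨hx, hy⟩).curry_left) hV (mem_of_mem_nhds ha)
    (hslice.mono fun s hs => hs y hy) hx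

theorem AnalyticAt.eventuallyEq_zero_of_eventually_ofReal_prod_eq_zero [CompleteSpace E]
    {Φ : ℂ × ℂ → E} {a b : ℝ} (hΦ : AnalyticAt ℂ Φ (a, b))
    (h0 : ∀ᶠ q : ℝ × ℝ in 𝓝 (a, b), Φ (q.1, q.2) = 0) :
    Φ =ᶠ[𝓝 ((a : ℂ), (b : ℂ))] 0 := by
  obtain ⟨ε, hε, hball⟩ := eventually_nhds_iff_ball.mp hΦ.eventually_analyticAt
  rw [← ball_prod_same] at hball
  filter_upwards [prod_mem_nhds (ball_mem_nhds _ hε) (ball_mem_nhds _ hε)] with q hq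
  exact AnalyticOnNhd.eqOn_zero_of_eventually_ofReal_prod_eq_zero hball
    (convex_ball _ _).isPreconnected (convex_ball _ _).isPreconnected (ball_mem_nhds _ hε)
    (mem_ball_self hε) h0 hq

theorem AnalyticAt.eventuallyEq_zero_of_eventually_eq_zero_conj [CompleteSpace E]
    {K : ℂ × ℂ → E} {p : ℂ} (hK : AnalyticAt ℂ K (p, conj p)) (h0 : ∀ᶠ z in 𝓝 p, K (z, conj z) = 0) :
    K =ᶠ[𝓝 (p, conj p)] 0 := by
  set L : ℂ × ℂ → ℂ × ℂ := fun q => (q.1 + q.2 * Complex.I, q.1 - q.2 * Complex.I)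
  set M : ℂ × ℂ → ℂ × ℂ := fun q => ((q.1 + q.2) / 2, (q.1 - q.2) / (2 * Complex.I))
  have hLM : ∀ q, L (M q) = q := by
    intro q
    ext <;> simp only [L, M] <;> field_simp <;> ring
  have hMp : M (p, conj p) = ((p.re : ℂ), (p.im : ℂ)) := by
    rw [Complex.re_eq_add_conj, Complex.im_eq_sub_conj]
  have hLp : L (p.re, p.im) = (p, conj p) := by rw [← hMp, hLM]
  have hKL : AnalyticAt ℂ (K ∘ L) (p.re, p.im) := by
    refine AnalyticAt.comp (hLp ▸ hK) ?_
    exact (analyticAt_fst.add (analyticAt_snd.mul analyticAt_const)).prod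
      (analyticAt_fst.sub (analyticAt_snd.mul analyticAt_const))
  have hreal : ∀ᶠ q : ℝ × ℝ in 𝓝 (p.re, p.im), (K ∘ L) (q.1, q.2) = 0 := by
    have hz : Tendsto (fun q : ℝ × ℝ => (q.1 : ℂ) + q.2 * Complex.I) (𝓝 (p.re, p.im)) (𝓝 p) := by
      have : Continuous (fun q : ℝ × ℝ => (q.1 : ℂ) + q.2 * Complex.I) := by fun_prop
      simpa only [Complex.re_add_im] using this.tendsto (p.re, p.im)
    filter_upwards [hz.eventually h0] with q hq
    simpa [L, sub_eq_add_neg] using hq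
  have hM : Tendsto M (𝓝 (p, conj p)) (𝓝 ((p.re : ℂ), (p.im : ℂ))) := by
    rw [← hMp]
    exact (show Continuous M by fun_prop).tendsto _
  filter_upwards [hM.eventually (hKL.eventuallyEq_zero_of_eventually_ofReal_prod_eq_zero hreal)]
    with q hq
  simpa [hLM] using hq

theorem AnalyticOnNhd.eqOn_zero_of_forall_eq_zero_conj [CompleteSpace E] {K : ℂ × ℂ → E} {U : Set ℂ}
    (hK : AnalyticOnNhd ℂ K (U ×ˢ (conj ⁻¹' U))) (hU : IsOpen U) (hUc : IsPreconnected U)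
    (h0 : ∀ z ∈ U, K (z, conj z) = 0) : EqOn K 0 (U ×ˢ (conj ⁻¹' U)) := by
  rintro ⟨z, w⟩ hzw
  have hzz : (z, conj z) ∈ U ×ˢ (conj ⁻¹' U) := ⟨hzw.1, by simpa using hzw.1⟩
  refine hK.eqOn_zero_of_preconnected_of_eventuallyEq_zero (hUc.prod ?_) hzz ?_ hzw
  · exact Complex.conjCLE.toHomeomorph.isPreconnected_preimage.mpr hUc
  · exact (hK _ hzz).eventuallyEq_zero_of_eventually_eq_zero_conj
      (eventually_of_mem (hU.mem_nhds hzw.1) h0)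

end

theorem stmt12_general (U : Set ℂ) (hUopen : IsOpen U)
    (hUconn : IsConnected U) (N : ℕ)
    (f g : Fin N → ℂ → ℂ)
    (hf : ∀ j, AnalyticOnNhd ℂ (f j) U)
    (hg : ∀ j, AnalyticOnNhd ℂ (fun z => conj (g j z)) U)
    (hvanish : ∀ z ∈ U, ∑ j, f j z * g j z = 0) :
    ∀ z ∈ U, ∀ w ∈ U, ∑ j, f j z * g j w = 0 := by
  set K : ℂ × ℂ → ℂ := fun q => ∑ j, f j q.1 * g j (conj q.2)
  have hK : AnalyticOnNhd ℂ K (U ×ˢ (conj ⁻¹' U)) := by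
    rintro ⟨z, w⟩ ⟨hz, hw⟩
    have hgj : ∀ j, AnalyticAt ℂ (fun q : ℂ × ℂ => g j (conj q.2)) (z, w) := fun j =>
      AnalyticAt.comp (g := fun w => g j (conj w))
        (by simpa [Function.comp_def] using (hg j _ hw).conj_conj) analyticAt_snd
    exact Finset.analyticAt_fun_sum _ fun j _ => ((hf j z hz).comp analyticAt_fst).mul (hgj j)
  intro z hz w hw
  simpa [K] using hK.eqOn_zero_of_forall_eq_zero_conj hUopen hUconn.isPreconnected
    (by simpa [K] using hvanish) (show (z, conj w) ∈ U ×ˢ (conj ⁻¹' U) by simpa using ⟨hz, hw⟩)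

/-- The holomorphic–antiholomorphic trick: let `U ⊆ ℂ` be a nonempty open connected set
and `f j` analytic on `U`, `g j` antiholomorphic on `U` (i.e. `z ↦ conj (g j z)` is
analytic on `U`), `1 ≤ N`. If `∑ j, f j z * g j z = 0` for all `z ∈ U`, then
`∑ j, f j z * g j w = 0` for all `z, w ∈ U`. -/
theorem stmt12 (U : Set ℂ) (hU : U.Nonempty) (hUopen : IsOpen U)
    (hUconn : IsConnected U) (N : ℕ) (hN : 1 ≤ N)
    (f g : Fin N → ℂ → ℂ)
    (hf : ∀ j, AnalyticOnNhd ℂ (f j) U)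
    (hg : ∀ j, AnalyticOnNhd ℂ (fun z => conj (g j z)) U)
    (hvanish : ∀ z ∈ U, ∑ j, f j z * g j z = 0) :
    ∀ z ∈ U, ∀ w ∈ U, ∑ j, f j z * g j w = 0 :=
  stmt12_general U hUopen hUconn N f g hf hg hvanish
end
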